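/- arXiv:1503.07343 — 6 statements merged into one kernel-verified Lean document; each statement's English description precedes it below -/
import Mathlib

section
/- Let F be a finite set with a distinguished element u₀, and let X be an ergodic grading of k^F by a group Γ. Then every nonzero homogeneous element a of k^F is invertible (i.e., a(x) ≠ 0 for all x ∈ F), each nonzero homogeneous component is one-dimensional, and in each nonzero homogeneous component of degree s there is a unique element a_s with a_s(u₀) = 1; moreover a_s has finite multiplicative order. -/
open Module

/-- Let `F` be a finite set with a distinguished element `u₀` and let
`𝒜` be an ergodic grading of `k^F = (F → k)` by a group `Γ` (the trivial-degree component is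
one-dimensional).  Then every nonzero homogeneous element is invertible (nowhere vanishing),
every nonzero homogeneous component is one-dimensional and contains a unique element
normalised at `u₀`; moreover every such normalised element has finite multiplicative order. -/
theorem ergodic_grading_of_functions
    {k F Γ : Type*} [Field k] [Fintype F] [Group Γ] [DecidableEq Γ]
    (u₀ : F) (𝒜 : Γ → Submodule k (F → k))
    (hdecomp : DirectSum.IsInternal 𝒜)
    (hmul : ∀ s t : Γ, ∀ a ∈ 𝒜 s, ∀ b ∈ 𝒜 t, a * b ∈ 𝒜 (s * t))
    (hone : (1 : F → k) ∈ 𝒜 1)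
    (hergodic : Module.finrank k (𝒜 1) = 1) :
    (∀ s : Γ, ∀ a ∈ 𝒜 s, a ≠ 0 → ∀ x : F, a x ≠ 0) ∧
    (∀ s : Γ, 𝒜 s ≠ ⊥ → Module.finrank k (𝒜 s) = 1) ∧
    (∀ s : Γ, 𝒜 s ≠ ⊥ →
      (∃! a : F → k, a ∈ 𝒜 s ∧ a u₀ = 1) ∧
      (∀ a ∈ 𝒜 s, a u₀ = 1 → ∃ n : ℕ, 0 < n ∧ a ^ n = 1)) := by
  classical
  have hone_ne : (1 : F → k) ≠ 0 := by
    intro h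
    have := congrFun h u₀
    simp at this
  -- every element of 𝒜 1 is a scalar multiple of 1
  have hA1 : ∀ b ∈ 𝒜 1, ∃ c : k, b = c • (1 : F → k) := by
    intro b hb
    have h1ne : (⟨1, hone⟩ : 𝒜 1) ≠ 0 := by
      intro h
      exact hone_ne (congrArg Subtype.val h)
    obtain ⟨c, hc⟩ := (finrank_eq_one_iff_of_nonzero' (⟨1, hone⟩ : 𝒜 1) h1ne).mp
      hergodic ⟨b, hb⟩
    exact ⟨c, by simpa using (congrArg Subtype.val hc).symm⟩
  -- powers of homogeneous elements are homogeneous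
  have hpow : ∀ s : Γ, ∀ a ∈ 𝒜 s, ∀ n : ℕ, a ^ n ∈ 𝒜 (s ^ n) := by
    intro s a ha n
    induction n with
    | zero => simpa using hone
    | succ n ih =>
      have := hmul (s ^ n) s _ ih a ha
      simpa [pow_succ] using this
  -- the key lemma
  have key : ∀ s : Γ, ∀ a ∈ 𝒜 s, a ≠ 0 →
      ∃ d : ℕ, 0 < d ∧ ∃ c : k, c ≠ 0 ∧ a ^ d = c • (1 : F → k) ∧ s ^ d = 1 := by
    intro s a ha hane
    obtain ⟨x, hx⟩ : ∃ x, a x ≠ 0 := by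
      by_contra h
      push_neg at h
      exact hane (funext fun x => h x)
    have hpowne : ∀ n : ℕ, a ^ n ≠ 0 := by
      intro n h
      have := congrFun h x
      simp only [Pi.pow_apply, Pi.zero_apply] at this
      exact pow_ne_zero n hx this
    set N := Module.finrank k (F → k) with hN
    have hninj : ¬ Function.Injective (fun n : Fin (N + 1) => s ^ (n : ℕ)) := by
      intro hinj
      have hind : iSupIndep (fun n : Fin (N + 1) => 𝒜 (s ^ (n : ℕ))) :=
        (hdecomp.submodule_iSupIndep).comp hinj
      have hnb : ∀ n : Fin (N + 1), 𝒜 (s ^ (n : ℕ)) ≠ ⊥ := by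
        intro n h
        exact hpowne n (by
          have := hpow s a ha (n : ℕ)
          rw [h] at this
          simpa using this)
      have hcard := hind.subtype_ne_bot_le_finrank
      have : Fintype.card {n : Fin (N + 1) // 𝒜 (s ^ (n : ℕ)) ≠ ⊥} = N + 1 := by
        rw [Fintype.card_congr (Equiv.subtypeUnivEquiv hnb)]; simp
      omega
    rw [Function.not_injective_iff] at hninj
    obtain ⟨i, j, hij, hne⟩ := hninj
    wlog hlt : (j : ℕ) < (i : ℕ) generalizing i j
    · have hij' : (i : ℕ) ≠ (j : ℕ) := fun h => hne (Fin.val_injective h)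
      exact this j i hij.symm (Ne.symm hne) (by omega)
    refine ⟨(i : ℕ) - (j : ℕ), by omega, ?_⟩
    have hsd : s ^ ((i : ℕ) - (j : ℕ)) = 1 := by
      have h : s ^ ((i : ℕ) - (j : ℕ)) * s ^ (j : ℕ) = s ^ (j : ℕ) := by
        rw [← pow_add, (by omega : (i : ℕ) - (j : ℕ) + (j : ℕ) = (i : ℕ)), hij]
      exact mul_right_cancel (h.trans (one_mul _).symm)
    have had : a ^ ((i : ℕ) - (j : ℕ)) ∈ 𝒜 1 := by
      have := hpow s a ha ((i : ℕ) - (j : ℕ))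
      rwa [hsd] at this
    obtain ⟨c, hc⟩ := hA1 _ had
    refine ⟨c, ?_, hc, hsd⟩
    intro h
    exact hpowne _ (by rw [hc, h, zero_smul])
  -- Part 1
  have part1 : ∀ s : Γ, ∀ a ∈ 𝒜 s, a ≠ 0 → ∀ x : F, a x ≠ 0 := by
    intro s a ha hane x hax
    obtain ⟨d, hd, c, hc, heq, -⟩ := key s a ha hane
    have := congrFun heq x
    simp only [Pi.pow_apply, Pi.smul_apply, Pi.one_apply, smul_eq_mul, mul_one] at this
    rw [hax, zero_pow (by omega)] at this
    exact hc this.symm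
  -- Part 2
  have part2 : ∀ s : Γ, 𝒜 s ≠ ⊥ → Module.finrank k (𝒜 s) = 1 := by
    intro s hs
    obtain ⟨a, ha, hane⟩ := Submodule.exists_mem_ne_zero_of_ne_bot hs
    obtain ⟨d, hd, c, hc, heq, hsd⟩ := key s a ha hane
    have hane' : (⟨a, ha⟩ : 𝒜 s) ≠ 0 := fun h => hane (congrArg Subtype.val h)
    rw [finrank_eq_one_iff_of_nonzero' (⟨a, ha⟩ : 𝒜 s) hane']
    rintro ⟨b, hb⟩
    obtain ⟨e, rfl⟩ : ∃ e, d = e + 1 := ⟨d - 1, by omega⟩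
    have hba : b * a ^ e ∈ 𝒜 1 := by
      have := hmul s (s ^ e) b hb _ (hpow s a ha e)
      rwa [show s * s ^ e = s ^ (e + 1) from (pow_succ' s e).symm, hsd] at this
    obtain ⟨μ, hμ⟩ := hA1 _ hba
    refine ⟨μ * c⁻¹, ?_⟩
    apply Subtype.ext
    simp only [SetLike.mk_smul_mk]
    funext x
    have h1 := congrFun hμ x
    have h2 := congrFun heq x
    simp only [Pi.mul_apply, Pi.pow_apply, Pi.smul_apply, Pi.one_apply, smul_eq_mul,
      mul_one] at h1 h2 ⊢
    have hax : a x ≠ 0 := part1 s a ha hane x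
    have haxe : (a x) ^ e ≠ 0 := pow_ne_zero _ hax
    have h3 : μ * a x = b x * c := by rw [← h2, pow_succ, ← mul_assoc, h1]
    field_simp
    linear_combination h3
  refine ⟨part1, part2, ?_⟩
  intro s hs
  obtain ⟨a, ha, hane⟩ := Submodule.exists_mem_ne_zero_of_ne_bot hs
  have hau : a u₀ ≠ 0 := part1 s a ha hane u₀
  constructor
  · refine ⟨(a u₀)⁻¹ • a, ⟨Submodule.smul_mem _ _ ha, by simp [inv_mul_cancel₀ hau]⟩, ?_⟩
    rintro b ⟨hb, hbu⟩
    have hdiff : b - (a u₀)⁻¹ • a ∈ 𝒜 s := Submodule.sub_mem _ hb (Submodule.smul_mem _ _ ha)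
    by_contra hne
    have hdne : b - (a u₀)⁻¹ • a ≠ 0 := fun h => hne (by rwa [sub_eq_zero] at h)
    have := part1 s _ hdiff hdne u₀
    simp [hbu, inv_mul_cancel₀ hau] at this
  · intro b hb hbu
    have hbne : b ≠ 0 := fun h => by simp [h] at hbu
    obtain ⟨d, hd, c, hc, heq, -⟩ := key s b hb hbne
    have hcval := congrFun heq u₀
    simp only [Pi.pow_apply, Pi.smul_apply, Pi.one_apply, smul_eq_mul, mul_one, hbu,
      one_pow] at hcval
    refine ⟨d, hd, ?_⟩
    rw [heq, ← hcval, one_smul]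
end

section
/- Let F be a finite set, u₀ ∈ F, and let X be a connected ergodic grading of k^F by a group Γ. Then the support of the grading (the set of s with (k^F)_s ≠ 0) equals all of Γ, the normalized homogeneous elements {a_s}_{s∈Γ} form a multiplicative basis of k^F, and k^F is isomorphic as a Γ-graded algebra to the group algebra kΓ. -/
/-!
Every nonzero homogeneous element `a` of degree `s` is invertible, with an inverse of degree
`s⁻¹`: its powers are nonzero (the algebra is reduced), so the degrees `s ^ n` all lie in the
finite support, `s` has finite order `d`, and `a ^ d` is a nonzero element of the trivial
component, which is `k · 1` by ergodicity. Hence the support is a subgroup, and all of `Γ` by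
connectedness. A homogeneous element is then determined by its degree and its value at `u₀`,
because a difference of two such elements vanishing at `u₀` cannot be invertible. So every
component is spanned by its normalised element `a_s`, and `a_s a_t = a_{st}`.
-/

section GradedAlgebra

variable {k A Γ : Type*} [Field k] [Ring A] [Algebra k A] {𝒜 : Γ → Submodule k A}

theorem pow_mem_pow_of_mem [Monoid Γ] (hone : (1 : A) ∈ 𝒜 1)
    (hmul : ∀ s t : Γ, ∀ a ∈ 𝒜 s, ∀ b ∈ 𝒜 t, a * b ∈ 𝒜 (s * t))
    {s : Γ} {a : A} (ha : a ∈ 𝒜 s) (n : ℕ) : a ^ n ∈ 𝒜 (s ^ n) := by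
  induction n with
  | zero => simpa using hone
  | succ n ih => simpa only [pow_succ] using hmul _ _ _ ih _ ha

theorem Submodule.exists_eq_algebraMap_of_finrank_eq_one [Nontrivial A] {V : Submodule k A}
    (hone : (1 : A) ∈ V) (hV : Module.finrank k V = 1) {x : A} (hx : x ∈ V) :
    ∃ c : k, x = algebraMap k A c := by
  obtain ⟨c, hc⟩ := (finrank_eq_one_iff_of_nonzero' (⟨1, hone⟩ : V) (by simp)).1 hV ⟨x, hx⟩
  exact ⟨c, by simpa [Algebra.algebraMap_eq_smul_one] using (congrArg Subtype.val hc).symm⟩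

theorem isOfFinOrder_of_mem [Group Γ] [IsReduced A] (hone : (1 : A) ∈ 𝒜 1)
    (hmul : ∀ s t : Γ, ∀ a ∈ 𝒜 s, ∀ b ∈ 𝒜 t, a * b ∈ 𝒜 (s * t))
    (hfin : {s : Γ | 𝒜 s ≠ ⊥}.Finite) {s : Γ} {a : A} (ha : a ∈ 𝒜 s) (ha0 : a ≠ 0) :
    IsOfFinOrder s := by
  refine finite_powers.1 (hfin.subset ?_)
  rintro _ ⟨n, rfl⟩ hbot
  have := pow_mem_pow_of_mem hone hmul ha n
  rw [hbot, Submodule.mem_bot] at this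
  exact pow_ne_zero n ha0 this

def HasHomogeneousInverses [Group Γ] (𝒜 : Γ → Submodule k A) : Prop :=
  ∀ s : Γ, ∀ a ∈ 𝒜 s, a ≠ 0 → ∃ b ∈ 𝒜 s⁻¹, a * b = 1

theorem hasHomogeneousInverses_of_isReduced [Group Γ] [IsReduced A] [Nontrivial A]
    (hone : (1 : A) ∈ 𝒜 1) (hmul : ∀ s t : Γ, ∀ a ∈ 𝒜 s, ∀ b ∈ 𝒜 t, a * b ∈ 𝒜 (s * t))
    (hergodic : Module.finrank k (𝒜 1) = 1) (hfin : {s : Γ | 𝒜 s ≠ ⊥}.Finite) :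
    HasHomogeneousInverses 𝒜 := by
  intro s a ha ha0
  set d := orderOf s
  have hd : 0 < d := (isOfFinOrder_of_mem hone hmul hfin ha ha0).orderOf_pos
  obtain ⟨c, hc⟩ := Submodule.exists_eq_algebraMap_of_finrank_eq_one hone hergodic
    (pow_orderOf_eq_one s ▸ pow_mem_pow_of_mem hone hmul ha d)
  have hc0 : c ≠ 0 := by
    rintro rfl
    exact pow_ne_zero d ha0 (by simpa using hc)
  have hdeg : s ^ (d - 1) = s⁻¹ :=
    eq_inv_of_mul_eq_one_left (by rw [← pow_succ, Nat.sub_add_cancel hd, pow_orderOf_eq_one])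
  refine ⟨c⁻¹ • a ^ (d - 1), Submodule.smul_mem _ _ (hdeg ▸ pow_mem_pow_of_mem hone hmul ha _), ?_⟩
  rw [mul_smul_comm, ← pow_succ', Nat.sub_add_cancel hd, hc, Algebra.smul_def, ← map_mul,
    inv_mul_cancel₀ hc0, map_one]

theorem ne_bot_of_mem_closure_support [Group Γ] [Nontrivial A] (hone : (1 : A) ∈ 𝒜 1)
    (hmul : ∀ s t : Γ, ∀ a ∈ 𝒜 s, ∀ b ∈ 𝒜 t, a * b ∈ 𝒜 (s * t))
    (hinv : HasHomogeneousInverses 𝒜)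
    {s : Γ} (hs : s ∈ Subgroup.closure {s : Γ | 𝒜 s ≠ ⊥}) : 𝒜 s ≠ ⊥ := by
  induction hs using Subgroup.closure_induction with
  | mem s hs => exact hs
  | one => exact (Submodule.ne_bot_iff _).2 ⟨1, hone, one_ne_zero⟩
  | mul s t _ _ hs ht =>
    obtain ⟨x, hx, hx0⟩ := (Submodule.ne_bot_iff _).1 hs
    obtain ⟨y, hy, hy0⟩ := (Submodule.ne_bot_iff _).1 ht
    obtain ⟨x', -, hxx'⟩ := hinv s x hx hx0
    obtain ⟨y', -, hyy'⟩ := hinv t y hy hy0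
    refine (Submodule.ne_bot_iff _).2 ⟨x * y, hmul _ _ _ hx _ hy, fun hxy => ?_⟩
    have : x * y * (y' * x') = 1 := by rw [mul_assoc, ← mul_assoc y, hyy', one_mul, hxx']
    simp [hxy] at this
  | inv s _ hs =>
    obtain ⟨x, hx, hx0⟩ := (Submodule.ne_bot_iff _).1 hs
    obtain ⟨x', hx', hxx'⟩ := hinv s x hx hx0
    exact (Submodule.ne_bot_iff _).2 ⟨x', hx', by rintro rfl; simp at hxx'⟩

theorem eq_of_mem_of_map_eq {B : Type*} [Ring B] [Nontrivial B] [Group Γ] (f : A →+* B)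
    (hinv : HasHomogeneousInverses 𝒜)
    {s : Γ} {x y : A} (hx : x ∈ 𝒜 s) (hy : y ∈ 𝒜 s) (h : f x = f y) : x = y := by
  by_contra hxy
  obtain ⟨b, -, hb⟩ := hinv s (x - y) (Submodule.sub_mem _ hx hy) (sub_ne_zero.2 hxy)
  simpa [h] using congrArg f hb

theorem exists_mem_map_eq_one [Group Γ] (φ : A →ₐ[k] k)
    (hinv : HasHomogeneousInverses 𝒜)
    {s : Γ} (hs : 𝒜 s ≠ ⊥) : ∃ a ∈ 𝒜 s, φ a = 1 := by
  obtain ⟨x, hx, hx0⟩ := (Submodule.ne_bot_iff _).1 hs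
  obtain ⟨y, -, hxy⟩ := hinv s x hx hx0
  have hφx : φ x ≠ 0 := left_ne_zero_of_mul_eq_one (by simpa using congrArg φ hxy)
  exact ⟨(φ x)⁻¹ • x, Submodule.smul_mem _ _ hx, by simp [hφx]⟩

theorem eq_span_singleton_of_map_eq_one [Group Γ] (φ : A →ₐ[k] k)
    (hinv : HasHomogeneousInverses 𝒜)
    {s : Γ} {a : A} (ha : a ∈ 𝒜 s) (hφa : φ a = 1) : 𝒜 s = k ∙ a := by
  refine le_antisymm (fun x hx => Submodule.mem_span_singleton.2 ⟨φ x, ?_⟩)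
    ((Submodule.span_singleton_le_iff_mem _ _).2 ha)
  exact eq_of_mem_of_map_eq φ.toRingHom hinv (Submodule.smul_mem _ _ ha) hx (by simp [hφa])

end GradedAlgebra

theorem DirectSum.IsInternal.exists_basis_eq {k ι M : Type*} [DivisionRing k] [DecidableEq ι]
    [AddCommGroup M] [Module k M] {N : ι → Submodule k M} (h : DirectSum.IsInternal N)
    (v : ι → M) (hN : ∀ i, N i = k ∙ v i) (hv : ∀ i, v i ≠ 0) :
    ∃ b : Module.Basis ι k M, ⇑b = v := by
  have hli : LinearIndependent k v :=
    h.submodule_iSupIndep.linearIndependent N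
      (fun i => hN i ▸ Submodule.mem_span_singleton_self _) hv
  have hsp : ⊤ ≤ Submodule.span k (Set.range v) := by
    rw [Submodule.span_range_eq_iSup, ← h.submodule_iSup_eq_top, iSup_congr hN]
  exact ⟨Module.Basis.mk hli hsp, Module.Basis.coe_mk hli hsp⟩

namespace Module.Basis

variable {k G A : Type*} [CommSemiring k] [Monoid G] [Semiring A] [Algebra k A]

noncomputable def monoidAlgebraEquiv (b : Basis G k A) (hone : b 1 = 1)
    (hmul : ∀ s t : G, b s * b t = b (s * t)) : MonoidAlgebra k G ≃ₐ[k] A :=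
  let f := MonoidAlgebra.lift k A G ⟨⟨b, hone⟩, fun s t => (hmul s t).symm⟩
  have hf : f.toLinearMap = ((MonoidAlgebra.basis G k).equiv b (Equiv.refl G)).toLinearMap :=
    (MonoidAlgebra.basis G k).ext fun s => by
      rw [LinearEquiv.coe_coe, Basis.equiv_apply]
      simp [f]
  AlgEquiv.ofBijective f <| by
    rw [← f.coe_toLinearMap, hf]
    exact ((MonoidAlgebra.basis G k).equiv b (Equiv.refl G)).bijective

@[simp]
theorem monoidAlgebraEquiv_single (b : Basis G k A) (hone : b 1 = 1)
    (hmul : ∀ s t : G, b s * b t = b (s * t)) (s : G) (c : k) :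
    b.monoidAlgebraEquiv hone hmul (MonoidAlgebra.single s c) = c • b s :=
  MonoidAlgebra.lift_single _ s c

end Module.Basis

/-- Let `F` be a finite set, `u₀ ∈ F`, and let `𝒜` be a connected ergodic
grading of `k^F = (F → k)` by a group `Γ`.  Then the support of the grading is all of `Γ`,
the normalised homogeneous elements `{a_s}_{s ∈ Γ}` form a multiplicative basis of `k^F`,
and `k^F` is isomorphic, as an algebra, to the group algebra `kΓ`, matching `a_s` with `s`. -/
theorem connected_ergodic_grading_is_group_algebra
    {k F Γ : Type*} [Field k] [Fintype F] [Group Γ] [DecidableEq Γ]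
    (u₀ : F) (𝒜 : Γ → Submodule k (F → k))
    (hdecomp : DirectSum.IsInternal 𝒜)
    (hmul : ∀ s t : Γ, ∀ a ∈ 𝒜 s, ∀ b ∈ 𝒜 t, a * b ∈ 𝒜 (s * t))
    (hone : (1 : F → k) ∈ 𝒜 1)
    (hergodic : Module.finrank k (𝒜 1) = 1)
    (hconn : Subgroup.closure {s : Γ | 𝒜 s ≠ ⊥} = ⊤) :
    (∀ s : Γ, 𝒜 s ≠ ⊥) ∧
    ∃ a : Γ → (F → k),
      (∀ s : Γ, a s ∈ 𝒜 s ∧ a s u₀ = 1) ∧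
      (∀ s t : Γ, a s * a t = a (s * t)) ∧
      (∃ b : Module.Basis Γ k (F → k), ∀ s : Γ, b s = a s) ∧
      ∃ iso : (F → k) ≃ₐ[k] MonoidAlgebra k Γ,
        ∀ s : Γ, iso (a s) = MonoidAlgebra.single s 1 := by
  have : Nonempty F := ⟨u₀⟩
  have hinv : HasHomogeneousInverses 𝒜 := hasHomogeneousInverses_of_isReduced hone hmul hergodic
    (Submodule.finite_ne_bot_of_iSupIndep hdecomp.submodule_iSupIndep)
  have hsupp : ∀ s : Γ, 𝒜 s ≠ ⊥ := fun s =>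
    ne_bot_of_mem_closure_support hone hmul hinv (hconn ▸ Subgroup.mem_top s)
  let φ : (F → k) →ₐ[k] k := Pi.evalAlgHom k (fun _ => k) u₀
  choose a ha hφa using fun s => exists_mem_map_eq_one φ hinv (hsupp s)
  have hmula : ∀ s t : Γ, a s * a t = a (s * t) := fun s t =>
    eq_of_mem_of_map_eq φ.toRingHom hinv (hmul _ _ _ (ha s) _ (ha t)) (ha _) (by simp [hφa])
  have ha1 : a 1 = 1 := eq_of_mem_of_map_eq φ.toRingHom hinv (ha 1) hone (by simp [hφa])
  obtain ⟨b, hb⟩ := hdecomp.exists_basis_eq a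
    (fun s => eq_span_singleton_of_map_eq_one φ hinv (ha s) (hφa s))
    (fun s h => by simpa [h] using hφa s)
  subst hb
  refine ⟨hsupp, b, fun s => ⟨ha s, hφa s⟩, hmula, ⟨b, fun _ => rfl⟩,
    (b.monoidAlgebraEquiv ha1 hmula).symm, fun s => ?_⟩
  rw [AlgEquiv.symm_apply_eq, Module.Basis.monoidAlgebraEquiv_single, one_smul]
end

section
/- Let C_n be a cyclic group of order n, and let X be a Hopf grading of k^{C_n}. Then the corresponding partition P_X of C_n (determined by the subalgebra of trivial-degree elements) contains the singleton {1} as one of its blocks. -/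
/-- Let `C_n` be a (finite) cyclic group and let `𝒜` be a Hopf grading of
`k^{C_n}` by an abelian group `Γ` (grading of the algebra with homogeneous counit and
antipode).  Then the block of the associated partition `P_X` of `C_n` containing the
identity — the equivalence class of `1` for the relation "all trivial-degree functions agree" —
is the singleton `{1}`. -/
theorem singleton_one_is_block_of_hopf_grading
    {k G Γ : Type*} [Field k] [Group G] [Fintype G] [IsCyclic G]
    [CommGroup Γ] [DecidableEq Γ]
    (𝒜 : Γ → Submodule k (G → k))
    (hdecomp : DirectSum.IsInternal 𝒜)
    (hmul : ∀ s t : Γ, ∀ a ∈ 𝒜 s, ∀ b ∈ 𝒜 t, a * b ∈ 𝒜 (s * t))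
    (hone : (1 : G → k) ∈ 𝒜 1)
    (hcounit : ∀ s : Γ, s ≠ 1 → ∀ a ∈ 𝒜 s, a 1 = 0)
    (hantipode : ∀ s : Γ, ∃ t : Γ, ∀ a ∈ 𝒜 s, (fun x : G => a x⁻¹) ∈ 𝒜 t) :
    {g : G | ∀ a : G → k, a ∈ 𝒜 1 → a g = a 1} = {1} := by
  classical
  ext g
  simp only [Set.mem_setOf_eq, Set.mem_singleton_iff]
  constructor
  · intro hg
    by_contra hg1
    -- decompose the delta function at g
    obtain ⟨x, hx⟩ := hdecomp.surjective (Pi.single g 1)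
    have hsum : ∀ p : G, ∑ t ∈ x.support, (x t : G → k) p = (Pi.single g 1 : G → k) p := by
      have hx' : ∑ t ∈ x.support, (x t : G → k) = (Pi.single g 1 : G → k) := by
        rw [← hx]
        conv_rhs => rw [← DirectSum.sum_support_of x]
        rw [map_sum]
        exact Finset.sum_congr rfl fun t _ => (DirectSum.coeAddMonoidHom_of 𝒜 t (x t)).symm
      intro p
      rw [← hx', Finset.sum_apply]
    -- the degree-1 component vanishes at 1, hence at g
    have hx1 : (x 1 : G → k) 1 = 0 := by
      have h0 : (Pi.single g (1 : k) : G → k) 1 = 0 := by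
        simp [Pi.single_apply, Ne.symm hg1]
      have := hsum 1
      rw [h0] at this
      by_cases hmem : (1 : Γ) ∈ x.support
      · rw [Finset.sum_eq_single_of_mem 1 hmem
          (fun t _ ht => hcounit t ht _ (x t).2)] at this
        exact this
      · have : (x 1 : G → k) = 0 := by
          simpa using DFinsupp.notMem_support_iff.mp hmem
        simp [this]
    have hx1g : (x 1 : G → k) g = 0 := by
      rw [hg _ (x 1).2, hx1]
    -- some component of nontrivial degree is nonzero at g
    have hsumg : ∑ t ∈ x.support, (x t : G → k) g = 1 := by
      rw [hsum g, Pi.single_eq_same]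
    obtain ⟨s, _, hsg⟩ : ∃ t ∈ x.support, (x t : G → k) g ≠ 0 := by
      by_contra h
      push_neg at h
      rw [Finset.sum_eq_zero h] at hsumg
      exact one_ne_zero hsumg.symm
    have hs1 : s ≠ 1 := by
      rintro rfl
      exact hsg hx1g
    set a : G → k := (x s : G → k) with ha_def
    have ha : a ∈ 𝒜 s := (x s).2
    have ha1 : a 1 = 0 := hcounit s hs1 a ha
    -- powers of a are homogeneous
    have hpow : ∀ n : ℕ, a ^ n ∈ 𝒜 (s ^ n) := by
      intro n
      induction n with
      | zero => simpa using hone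
      | succ n ih =>
        rw [pow_succ, pow_succ]
        exact hmul _ _ _ ih _ ha
    have hpowg : ∀ n : ℕ, (a ^ n) g ≠ 0 := by
      intro n
      rw [Pi.pow_apply]
      exact pow_ne_zero n hsg
    -- s has finite order since the grading submodules are independent
    have hninj : ¬ Function.Injective (fun n : ℕ => s ^ n) := by
      intro hinj
      have hind : iSupIndep (fun n : ℕ => 𝒜 (s ^ n)) :=
        hdecomp.submodule_iSupIndep.comp hinj
      have hli : LinearIndependent k (fun n : ℕ => a ^ n) :=
        hind.linearIndependent _ (fun n => hpow n)
          (fun n => fun h => hpowg n (by rw [h]; rfl))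
      have : Finite ℕ := hli.finite
      exact not_finite ℕ
    rw [Function.not_injective_iff] at hninj
    obtain ⟨i, j, hij, hne⟩ := hninj
    -- wlog i > j
    have key : ∀ i j : ℕ, j < i → s ^ i = s ^ j → False := by
      intro i j hlt heq
      have hm : 0 < i - j := Nat.sub_pos_of_lt hlt
      have hsm : s ^ (i - j) = 1 := by
        have : s ^ (j + (i - j)) = s ^ j * 1 := by
          rw [Nat.add_sub_cancel' hlt.le, heq, mul_one]
        rw [pow_add] at this
        exact mul_left_cancel this
      have hmem : a ^ (i - j) ∈ 𝒜 1 := by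
        have := hpow (i - j)
        rwa [hsm] at this
      have := hg _ hmem
      rw [Pi.pow_apply, Pi.pow_apply, ha1, zero_pow hm.ne'] at this
      exact pow_ne_zero _ hsg this
    rcases lt_or_gt_of_ne hne with h | h
    · exact key j i h hij.symm
    · exact key i j h hij
  · rintro rfl
    intro a _
    rfl
end

section
/- For any field k, every Hopf grading of k^{C_2} (the Hopf algebra of functions on the cyclic group of order 2) is trivial: all elements are of trivial degree. Consequently the Hopf fundamental group of k^{C_2} is the trivial group. -/
/-! A function `a` on `C₂` of nontrivial degree `s` vanishes at `1` (counit), so it is supported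
at the generator `t` and `a * a = a t • a`. Thus `a * a` lies in both `𝒜 s` and `𝒜 (s * s)`,
which are independent since `s ≠ s * s`; hence `a * a = 0`, and `a = 0` because `k` is reduced. -/

theorem Pi.mul_self_eq_smul_of_eq_zero_of_ne {X R : Type*} [CommMonoidWithZero R]
    {a : X → R} {x : X} (ha : ∀ y ≠ x, a y = 0) : a * a = a x • a := by
  funext y
  by_cases hy : y = x
  · simp [hy]
  · simp [ha y hy]

theorem mul_self_eq_zero_of_mem_of_iSupIndep {ι R A : Type*} [Monoid ι] [IsLeftCancelMul ι]
    [Semiring R] [Mul A] [AddCommMonoid A] [Module R A] {𝒜 : ι → Submodule R A}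
    (hind : iSupIndep 𝒜) (hmul : ∀ s t : ι, ∀ a ∈ 𝒜 s, ∀ b ∈ 𝒜 t, a * b ∈ 𝒜 (s * t))
    {s : ι} (hs : s ≠ 1) {a : A} (ha : a ∈ 𝒜 s) (hsq : a * a ∈ 𝒜 s) : a * a = 0 := by
  have hne : s ≠ s * s := fun h => hs (mul_eq_left.mp h.symm)
  exact Submodule.disjoint_def.mp (hind.pairwiseDisjoint hne) _ hsq (hmul s s a ha a ha)

theorem Multiplicative.zmod_two_eq_one_of_ne_ofAdd_one {y : Multiplicative (ZMod 2)}
    (hy : y ≠ Multiplicative.ofAdd 1) : y = 1 := by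
  revert y
  decide

theorem hopf_grading_of_functions_on_C2_is_trivial_general
    {k Γ : Type*} [Field k] [CommGroup Γ] [DecidableEq Γ]
    (𝒜 : Γ → Submodule k (Multiplicative (ZMod 2) → k))
    (hdecomp : DirectSum.IsInternal 𝒜)
    (hmul : ∀ s t : Γ, ∀ a ∈ 𝒜 s, ∀ b ∈ 𝒜 t, a * b ∈ 𝒜 (s * t))
    (hcounit : ∀ s : Γ, s ≠ 1 → ∀ a ∈ 𝒜 s, a 1 = 0) :
    (∀ s : Γ, s ≠ 1 → 𝒜 s = ⊥) ∧
    (Subgroup.closure {s : Γ | 𝒜 s ≠ ⊥} = ⊤ → ∀ s : Γ, s = 1) := by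
  have hbot : ∀ s : Γ, s ≠ 1 → 𝒜 s = ⊥ := by
    intro s hs
    refine (Submodule.eq_bot_iff _).2 fun a ha => ?_
    have hsupp : ∀ y ≠ Multiplicative.ofAdd 1, a y = 0 := fun y hy =>
      Multiplicative.zmod_two_eq_one_of_ne_ofAdd_one hy ▸ hcounit s hs a ha
    have hsq : a * a ∈ 𝒜 s :=
      Pi.mul_self_eq_smul_of_eq_zero_of_ne hsupp ▸ Submodule.smul_mem _ _ ha
    have hzero : a * a = 0 :=
      mul_self_eq_zero_of_mem_of_iSupIndep hdecomp.submodule_iSupIndep hmul hs ha hsq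
    exact IsReduced.eq_zero a ⟨2, by rw [pow_two, hzero]⟩
  refine ⟨hbot, fun hcl s => ?_⟩
  have hsupport : {s : Γ | 𝒜 s ≠ ⊥} ⊆ {1} := fun u hu => by_contra fun h => hu (hbot u h)
  have htop : (⊤ : Subgroup Γ) ≤ ⊥ :=
    hcl ▸ Subgroup.closure_singleton_one (G := Γ) ▸ Subgroup.closure_mono hsupport
  exact Subgroup.mem_bot.mp (htop (Subgroup.mem_top s))

/-- For any field `k`, every Hopf grading of `k^{C_2}` (functions on the
cyclic group of order `2`) is trivial: every nontrivial degree has zero homogeneous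
component.  Consequently every connected Hopf grading of `k^{C_2}` has trivial grading
group, so the Hopf fundamental group of `k^{C_2}` is the trivial group. -/
theorem hopf_grading_of_functions_on_C2_is_trivial
    {k Γ : Type*} [Field k] [CommGroup Γ] [DecidableEq Γ]
    (𝒜 : Γ → Submodule k (Multiplicative (ZMod 2) → k))
    (hdecomp : DirectSum.IsInternal 𝒜)
    (hmul : ∀ s t : Γ, ∀ a ∈ 𝒜 s, ∀ b ∈ 𝒜 t, a * b ∈ 𝒜 (s * t))
    (hone : (1 : Multiplicative (ZMod 2) → k) ∈ 𝒜 1)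
    (hcounit : ∀ s : Γ, s ≠ 1 → ∀ a ∈ 𝒜 s, a 1 = 0)
    (hantipode : ∀ s : Γ, ∃ t : Γ,
      ∀ a ∈ 𝒜 s, (fun x : Multiplicative (ZMod 2) => a x⁻¹) ∈ 𝒜 t) :
    (∀ s : Γ, s ≠ 1 → 𝒜 s = ⊥) ∧
    (Subgroup.closure {s : Γ | 𝒜 s ≠ ⊥} = ⊤ → ∀ s : Γ, s = 1) :=
  hopf_grading_of_functions_on_C2_is_trivial_general 𝒜 hdecomp hmul hcounit
end

section
/- Let k be a field of characteristic different from 2. Up to isomorphism there is a unique nontrivial connected Hopf grading of k^{C_3} and its grading group is C_2: the trivial-degree component is spanned by δ_1 and δ_t + δ_{t²}, and the nontrivial component is spanned by h = δ_t − δ_{t²}. If char k = 2 there is no nontrivial connected Hopf grading of k^{C_3}. -/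
/-!
Write `t = ofAdd 1` for the generator of `C₃` and `ε(a) = a 1` for the counit. Every component
of degree `≠ 1` lies in the plane `ker ε`, and is a proper subspace of it, because `ker ε`
contains the idempotent `δ_t`, which can only be homogeneous of degree `1`; so the nontrivial
components are lines. Nonzero homogeneous elements of `ker ε` in three distinct degrees would be
linearly independent. Since `k^{C₃}` is reduced, this excludes two nontrivial components
`k a`, `k b`: consider `a, b, a²` if the degree `s` of `a` has `s² = 1`, and `a, a², a³`
otherwise. So there is exactly one nontrivial component `k a`, and `s² = 1` because `a² ≠ 0`
has degree `s² ≠ s`. Then `a³ ∈ k a` while `a² ∈ 𝒜 1` is not in `k a`; in coordinates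
`a = (0, p, q)` this forces `q = -p ≠ p`, so `2 ≠ 0` and `a` is a multiple of
`h = δ_t - δ_{t²}`. Finally `h² = δ_t + δ_{t²}` lies in `𝒜 1`, and every `v ∈ 𝒜 1` has
`v h ∈ k h`, that is, `v t = v t²`.
-/

/-- The degree-`s` component of the convolution grading of `k^{G×G} ≅ k^G ⊗ k^G`
induced by a grading `𝒜` of `k^G` by an abelian group `Γ`. -/
def tensorComponent {k G Γ : Type*} [Field k] [Group G] [Group Γ]
    (𝒜 : Γ → Submodule k (G → k)) (s : Γ) : Submodule k (G × G → k) :=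
  ⨆ u : Γ, Submodule.span k
    {f : G × G → k | ∃ b ∈ 𝒜 u, ∃ c ∈ 𝒜 (u⁻¹ * s), f = fun p => b p.1 * c p.2}

open Multiplicative Module

def IsMulGraded {Γ R A : Type*} [Mul Γ] [Semiring R] [Mul A] [AddCommMonoid A] [Module R A]
    (𝒜 : Γ → Submodule R A) : Prop :=
  ∀ s t : Γ, ∀ a ∈ 𝒜 s, ∀ b ∈ 𝒜 t, a * b ∈ 𝒜 (s * t)

namespace DirectSum.IsInternal

variable {ι R M : Type*} [DecidableEq ι]

theorem eq_zero_of_mem_of_ne [Semiring R] [AddCommMonoid M] [Module R M]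
    {𝒜 : ι → Submodule R M} (h : IsInternal 𝒜) {i j : ι} (hij : i ≠ j) {x : M}
    (hi : x ∈ 𝒜 i) (hj : x ∈ 𝒜 j) : x = 0 :=
  Submodule.disjoint_def.mp (h.submodule_iSupIndep.pairwiseDisjoint hij) x hi hj

theorem card_le_finrank_of_inf_ne_bot [DivisionRing R] [AddCommGroup M] [Module R M]
    {𝒜 : ι → Submodule R M} (h : IsInternal 𝒜) (W : Submodule R M) [FiniteDimensional R W]
    (D : Finset ι) (hD : ∀ i ∈ D, 𝒜 i ⊓ W ≠ ⊥) : D.card ≤ finrank R W := by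
  have hv (i : D) : ∃ v ∈ 𝒜 i ⊓ W, v ≠ 0 := (Submodule.ne_bot_iff _).mp (hD i i.2)
  choose v hvW hv0 using hv
  have hind : LinearIndependent R v :=
    (h.submodule_iSupIndep.comp Subtype.val_injective).linearIndependent _
      (fun i => (hvW i).1) hv0
  have hindW : LinearIndependent R fun i => (⟨v i, (hvW i).2⟩ : W) :=
    LinearIndependent.of_comp W.subtype hind
  simpa using hindW.fintype_card_le_finrank

theorem eq_one_of_isIdempotentElem_mem {Γ A : Type*} [Group Γ] [DecidableEq Γ] [Semiring R]
    [Semiring A] [Module R A] {𝒜 : Γ → Submodule R A} (h : IsInternal 𝒜)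
    (hmul : IsMulGraded 𝒜) {e : A} (he : IsIdempotentElem e) (he0 : e ≠ 0) {x : Γ}
    (hx : e ∈ 𝒜 x) : x = 1 := by
  by_contra hx1
  have hxx : e ∈ 𝒜 (x * x) := he ▸ hmul x x e hx e hx
  exact he0 (h.eq_zero_of_mem_of_ne (fun hx' => hx1 (mul_eq_right.mp hx')) hxx hx)

end DirectSum.IsInternal

theorem Subgroup.eq_one_or_eq_of_mem_closure {G : Type*} [Group G] {S : Set G} {s : G}
    (hs : s * s = 1) (hS : S ⊆ {1, s}) {u : G} (hu : u ∈ closure S) : u = 1 ∨ u = s := by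
  induction hu using Subgroup.closure_induction with
  | mem x hx => exact hS hx
  | one => exact .inl rfl
  | mul x y _ _ hx hy => rcases hx with rfl | rfl <;> rcases hy with rfl | rfl <;> simp [hs]
  | inv x _ hx => rcases hx with rfl | rfl <;> simp [inv_eq_of_mul_eq_one_right hs]

theorem IsMulGraded.mul_self_eq_one_of_support_subset {Γ R A : Type*} [Group Γ] [Semiring R]
    [Semiring A] [IsReduced A] [Module R A] {𝒜 : Γ → Submodule R A} (hmul : IsMulGraded 𝒜)
    {s : Γ} (hs1 : s ≠ 1) (hs : 𝒜 s ≠ ⊥) (hsupp : ∀ u, 𝒜 u ≠ ⊥ → u = 1 ∨ u = s) :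
    s * s = 1 := by
  obtain ⟨a, ha, ha0⟩ := (Submodule.ne_bot_iff _).mp hs
  have hss : 𝒜 (s * s) ≠ ⊥ := (Submodule.ne_bot_iff _).mpr
    ⟨a * a, hmul s s a ha a ha, by simpa [sq] using pow_ne_zero 2 ha0⟩
  exact (hsupp _ hss).resolve_right fun h => hs1 (mul_eq_right.mp h)

abbrev counitKer (k G : Type*) [Field k] [One G] : Submodule k (G → k) :=
  LinearMap.ker (LinearMap.proj 1)

theorem finrank_counitKer (k G : Type*) [Field k] [Fintype G] [DecidableEq G] [One G] :
    finrank k (counitKer k G) = Fintype.card G - 1 := by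
  have hrange : LinearMap.range (LinearMap.proj 1 : (G → k) →ₗ[k] k) = ⊤ :=
    LinearMap.range_eq_top.mpr fun c => ⟨Pi.single 1 c, by simp⟩
  have := LinearMap.finrank_range_add_finrank_ker (LinearMap.proj 1 : (G → k) →ₗ[k] k)
  rw [hrange, finrank_top, finrank_self, finrank_fintype_fun_eq_card] at this
  exact Nat.eq_sub_of_add_eq' this

local notation "C₃" => Multiplicative (ZMod 3)

namespace FunctionsOnC3

variable {k : Type*} [Field k]

def oddDelta (k : Type*) [Field k] : C₃ → k := Pi.single (ofAdd 1) 1 - Pi.single (ofAdd 2) 1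

@[simp] theorem oddDelta_apply_one : oddDelta k 1 = 0 := by simp +decide [oddDelta]

@[simp] theorem oddDelta_apply_ofAdd_one : oddDelta k (ofAdd 1) = 1 := by simp +decide [oddDelta]

@[simp] theorem oddDelta_apply_ofAdd_two : oddDelta k (ofAdd 2) = -1 := by
  simp +decide [oddDelta]

omit [Field k] in
theorem ext {f g : C₃ → k} (h1 : f 1 = g 1) (ht : f (ofAdd 1) = g (ofAdd 1))
    (ht2 : f (ofAdd 2) = g (ofAdd 2)) : f = g := by
  funext x
  obtain rfl | rfl | rfl : x = 1 ∨ x = ofAdd 1 ∨ x = ofAdd 2 := by decide +revert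
  all_goals assumption

theorem finrank_counitKer_eq_two : finrank k (counitKer k C₃) = 2 :=
  finrank_counitKer k C₃

theorem eq_smul_oddDelta {a : C₃ → k} (ha1 : a 1 = 0) (hcube : a * a * a ∈ k ∙ a)
    (hsq : a * a ∉ k ∙ a) : (2 : k) ≠ 0 ∧ ∃ p : k, p ≠ 0 ∧ a = p • oddDelta k := by
  set p := a (ofAdd 1)
  set q := a (ofAdd 2)
  have hsq' (μ : k) : ¬ (p * p = μ * p ∧ q * q = μ * q) := fun hμ =>
    hsq <| Submodule.mem_span_singleton.mpr ⟨μ, ext (by simp [ha1]) hμ.1.symm hμ.2.symm⟩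
  have hp : p ≠ 0 := fun hp => hsq' q ⟨by simp [hp], by ring⟩
  have hq : q ≠ 0 := fun hq => hsq' p ⟨by ring, by simp [hq]⟩
  have hpq : p ≠ q := fun h => hsq' p ⟨by ring, by rw [h]⟩
  obtain ⟨c, hc⟩ := Submodule.mem_span_singleton.mp hcube
  have hcp : c = p * p := mul_right_cancel₀ hp (by simpa using congrFun hc (ofAdd 1))
  have hcq : c = q * q := mul_right_cancel₀ hq (by simpa using congrFun hc (ofAdd 2))
  have hqp : q = -p := by
    have : (p - q) * (p + q) = 0 := by linear_combination hcq - hcp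
    exact eq_neg_of_add_eq_zero_right ((mul_eq_zero.mp this).resolve_left (sub_ne_zero.mpr hpq))
  exact ⟨fun h2 => hpq (by linear_combination p * h2 - hqp), p, hp,
    ext (by simp [ha1]) (by simp [p]) (by simp [← hqp, q])⟩

theorem oddDelta_mul_self :
    oddDelta k * oddDelta k = Pi.single (ofAdd 1) 1 + Pi.single (ofAdd 2) 1 :=
  ext (by simp +decide) (by simp +decide) (by simp +decide)

theorem mem_span_of_mul_oddDelta_mem {v : C₃ → k} (hv : v * oddDelta k ∈ k ∙ oddDelta k) :
    v ∈ Submodule.span k {Pi.single 1 1, Pi.single (ofAdd 1) 1 + Pi.single (ofAdd 2) 1} := by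
  obtain ⟨μ, hμ⟩ := Submodule.mem_span_singleton.mp hv
  have ht : μ = v (ofAdd 1) := by simpa using congrFun hμ (ofAdd 1)
  have ht2 : μ = v (ofAdd 2) := by simpa using congrFun hμ (ofAdd 2)
  exact Submodule.mem_span_pair.mpr
    ⟨v 1, μ, ext (by simp +decide) (by simp +decide [ht]) (by simp +decide [ht2])⟩

variable {Γ : Type*} [Group Γ] {𝒜 : Γ → Submodule k (C₃ → k)}

theorem finrank_component_le_one [DecidableEq Γ] (hint : DirectSum.IsInternal 𝒜)
    (hmul : IsMulGraded 𝒜) (hcounit : ∀ s : Γ, s ≠ 1 → ∀ a ∈ 𝒜 s, a 1 = 0) {x : Γ}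
    (hx : x ≠ 1) : finrank k (𝒜 x) ≤ 1 := by
  have hδ : (Pi.single (ofAdd 1) 1 : C₃ → k) ∈ counitKer k C₃ := by simp +decide
  have hlt : 𝒜 x < counitKer k C₃ :=
    lt_of_le_of_ne (fun a ha => hcounit x hx a ha) fun heq => hx <|
      hint.eq_one_of_isIdempotentElem_mem hmul (by ext; simp [Pi.single_apply])
        (by simp) (heq ▸ hδ)
  have := Submodule.finrank_lt_finrank_of_lt hlt
  rw [finrank_counitKer_eq_two] at this
  omega

theorem component_eq_span_singleton [DecidableEq Γ] (hint : DirectSum.IsInternal 𝒜)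
    (hmul : IsMulGraded 𝒜) (hcounit : ∀ s : Γ, s ≠ 1 → ∀ a ∈ 𝒜 s, a 1 = 0) {x : Γ}
    (hx : x ≠ 1) {a : C₃ → k} (ha : a ∈ 𝒜 x) (ha0 : a ≠ 0) : 𝒜 x = k ∙ a :=
  (Submodule.eq_of_le_of_finrank_le ((Submodule.span_singleton_le_iff_mem _ _).mpr ha)
    (by rw [finrank_span_singleton ha0]; exact finrank_component_le_one hint hmul hcounit hx)).symm

theorem component_eq_bot_of_ne [DecidableEq Γ] (hint : DirectSum.IsInternal 𝒜)
    (hmul : IsMulGraded 𝒜) (hcounit : ∀ s : Γ, s ≠ 1 → ∀ a ∈ 𝒜 s, a 1 = 0) {s u : Γ}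
    (hs1 : s ≠ 1) (hu1 : u ≠ 1) (hsu : s ≠ u) (hs : 𝒜 s ≠ ⊥) : 𝒜 u = ⊥ := by
  by_contra hu
  obtain ⟨a, ha, ha0⟩ := (Submodule.ne_bot_iff _).mp hs
  obtain ⟨b, hb, hb0⟩ := (Submodule.ne_bot_iff _).mp hu
  have ha1 := hcounit s hs1 a ha
  have hmeet {x : Γ} {c : C₃ → k} (hc : c ∈ 𝒜 x) (hc1 : c 1 = 0) (hc0 : c ≠ 0) :
      𝒜 x ⊓ counitKer k C₃ ≠ ⊥ :=
    (Submodule.ne_bot_iff _).mpr ⟨c, ⟨hc, hc1⟩, hc0⟩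
  have hcard (D : Finset Γ) (hD : ∀ x ∈ D, 𝒜 x ⊓ counitKer k C₃ ≠ ⊥) : D.card ≤ 2 :=
    finrank_counitKer_eq_two (k := k) ▸ hint.card_le_finrank_of_inf_ne_bot _ D hD
  have ha2 : a * a ∈ 𝒜 (s * s) := hmul s s a ha a ha
  have hdeg1 := hmeet ha ha1 ha0
  have hdeg2 := hmeet ha2 (by simp [ha1]) (by simpa [sq] using pow_ne_zero 2 ha0)
  by_cases hss : s * s = 1
  · have hD := hcard {s, u, s * s} (by simp [hdeg1, hdeg2, hmeet hb (hcounit u hu1 b hb) hb0])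
    rw [Finset.card_eq_three.mpr ⟨s, u, s * s, hsu, hss ▸ hs1, hss ▸ hu1, rfl⟩] at hD
    omega
  · have hdeg3 := hmeet (hmul _ _ _ ha2 a ha) (by simp [ha1])
      (by simpa [pow_three'] using pow_ne_zero 3 ha0)
    have hD := hcard {s, s * s, s * s * s} (by simp [hdeg1, hdeg2, hdeg3])
    rw [Finset.card_eq_three.mpr ⟨s, s * s, s * s * s, fun h => hs1 (left_eq_mul.mp h),
      fun h => hss (left_eq_mul.mp (h.trans (mul_assoc s s s))),
      fun h => hs1 (left_eq_mul.mp h), rfl⟩] at hD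
    omega

theorem component_one_eq_span_pair (hmul : IsMulGraded 𝒜) (hone : (1 : C₃ → k) ∈ 𝒜 1)
    {s : Γ} (hss : s * s = 1) (hs : 𝒜 s = k ∙ oddDelta k) :
    𝒜 1 = Submodule.span k {Pi.single 1 1, Pi.single (ofAdd 1) 1 + Pi.single (ofAdd 2) 1} := by
  have hodd : oddDelta k ∈ 𝒜 s := hs ▸ Submodule.mem_span_singleton_self _
  have hsq : Pi.single (ofAdd 1) 1 + Pi.single (ofAdd 2) 1 ∈ 𝒜 1 :=
    hss ▸ oddDelta_mul_self (k := k) ▸ hmul s s _ hodd _ hodd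
  apply le_antisymm
  · intro v hv
    exact mem_span_of_mul_oddDelta_mem (hs ▸ by simpa using hmul 1 s v hv _ hodd)
  rw [Submodule.span_le]
  rintro _ (rfl | rfl)
  · have : (Pi.single 1 1 : C₃ → k) = 1 - (Pi.single (ofAdd 1) 1 + Pi.single (ofAdd 2) 1) :=
      ext (by simp +decide) (by simp +decide) (by simp +decide)
    rw [this]
    exact sub_mem hone hsq
  · exact hsq

end FunctionsOnC3

theorem hopf_gradings_of_functions_on_C3_general
    {k Γ : Type*} [Field k] [CommGroup Γ] [DecidableEq Γ]
    (𝒜 : Γ → Submodule k (Multiplicative (ZMod 3) → k))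
    (hdecomp : DirectSum.IsInternal 𝒜)
    (hmul : ∀ s t : Γ, ∀ a ∈ 𝒜 s, ∀ b ∈ 𝒜 t, a * b ∈ 𝒜 (s * t))
    (hone : (1 : Multiplicative (ZMod 3) → k) ∈ 𝒜 1)
    (hcounit : ∀ s : Γ, s ≠ 1 → ∀ a ∈ 𝒜 s, a 1 = 0)
    (hconn : Subgroup.closure {s : Γ | 𝒜 s ≠ ⊥} = ⊤)
    (hnontriv : ∃ s : Γ, s ≠ 1 ∧ 𝒜 s ≠ ⊥) :
    (2 : k) ≠ 0 ∧
    ∃ s : Γ, s ≠ 1 ∧ s * s = 1 ∧ (∀ u : Γ, u = 1 ∨ u = s) ∧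
      𝒜 1 = Submodule.span k
        {(Pi.single (1 : Multiplicative (ZMod 3)) (1 : k) : Multiplicative (ZMod 3) → k),
         (Pi.single (Multiplicative.ofAdd (1 : ZMod 3)) (1 : k) : Multiplicative (ZMod 3) → k)
           + (Pi.single (Multiplicative.ofAdd (2 : ZMod 3)) (1 : k) :
              Multiplicative (ZMod 3) → k)} ∧
      𝒜 s = Submodule.span k
        {(Pi.single (Multiplicative.ofAdd (1 : ZMod 3)) (1 : k) : Multiplicative (ZMod 3) → k)
           - (Pi.single (Multiplicative.ofAdd (2 : ZMod 3)) (1 : k) :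
              Multiplicative (ZMod 3) → k)} := by
  obtain ⟨s, hs1, hs⟩ := hnontriv
  have hsupp (u : Γ) (hu : 𝒜 u ≠ ⊥) : u = 1 ∨ u = s := by
    by_contra! h
    exact hu (FunctionsOnC3.component_eq_bot_of_ne hdecomp hmul hcounit hs1 h.1 h.2.symm hs)
  have hss : s * s = 1 := IsMulGraded.mul_self_eq_one_of_support_subset hmul hs1 hs hsupp
  obtain ⟨a, ha, ha0⟩ := (Submodule.ne_bot_iff _).mp hs
  have hline := FunctionsOnC3.component_eq_span_singleton hdecomp hmul hcounit hs1 ha ha0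
  have haa : a * a ∈ 𝒜 1 := hss ▸ hmul s s a ha a ha
  have hcube : a * a * a ∈ k ∙ a := hline ▸ by simpa [hss] using hmul _ _ _ haa a ha
  have hsq : a * a ∉ k ∙ a := fun h =>
    pow_ne_zero 2 ha0 (sq a ▸ hdecomp.eq_zero_of_mem_of_ne hs1.symm haa (hline ▸ h))
  obtain ⟨h2, p, hp, rfl⟩ := FunctionsOnC3.eq_smul_oddDelta (hcounit s hs1 a ha) hcube hsq
  have hodd : 𝒜 s = k ∙ FunctionsOnC3.oddDelta k := by
    rw [hline, Submodule.span_singleton_smul_eq (IsUnit.mk0 p hp)]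
  exact ⟨h2, s, hs1, hss,
    fun u => Subgroup.eq_one_or_eq_of_mem_closure hss hsupp (hconn ▸ Subgroup.mem_top u),
    FunctionsOnC3.component_one_eq_span_pair hmul hone hss hodd, hodd⟩

/-- Let `C_3 = ⟨t⟩` and let `𝒜` be a nontrivial connected Hopf grading of
`k^{C_3}` by an abelian group `Γ` (comultiplication, counit and antipode homogeneous).  Then
the characteristic of `k` is different from `2`, and the grading is the unique one with
group `C_2`: there is `s ∈ Γ` with `s ≠ 1`, `s² = 1`, `Γ = {1, s}`, trivial component
spanned by `δ_1` and `δ_t + δ_{t²}`, and degree-`s` component spanned by `δ_t − δ_{t²}`.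
In particular in characteristic `2` there is no nontrivial connected Hopf grading. -/
theorem hopf_gradings_of_functions_on_C3
    {k Γ : Type*} [Field k] [CommGroup Γ] [DecidableEq Γ]
    (𝒜 : Γ → Submodule k (Multiplicative (ZMod 3) → k))
    (hdecomp : DirectSum.IsInternal 𝒜)
    (hmul : ∀ s t : Γ, ∀ a ∈ 𝒜 s, ∀ b ∈ 𝒜 t, a * b ∈ 𝒜 (s * t))
    (hone : (1 : Multiplicative (ZMod 3) → k) ∈ 𝒜 1)
    (hcounit : ∀ s : Γ, s ≠ 1 → ∀ a ∈ 𝒜 s, a 1 = 0)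
    (hantipode : ∀ s : Γ, ∃ t : Γ,
      ∀ a ∈ 𝒜 s, (fun x : Multiplicative (ZMod 3) => a x⁻¹) ∈ 𝒜 t)
    (hcomul : ∀ s : Γ, ∀ a ∈ 𝒜 s,
      (fun p : Multiplicative (ZMod 3) × Multiplicative (ZMod 3) => a (p.1 * p.2))
        ∈ tensorComponent 𝒜 s)
    (hconn : Subgroup.closure {s : Γ | 𝒜 s ≠ ⊥} = ⊤)
    (hnontriv : ∃ s : Γ, s ≠ 1 ∧ 𝒜 s ≠ ⊥) :
    (2 : k) ≠ 0 ∧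
    ∃ s : Γ, s ≠ 1 ∧ s * s = 1 ∧ (∀ u : Γ, u = 1 ∨ u = s) ∧
      𝒜 1 = Submodule.span k
        {(Pi.single (1 : Multiplicative (ZMod 3)) (1 : k) : Multiplicative (ZMod 3) → k),
         (Pi.single (Multiplicative.ofAdd (1 : ZMod 3)) (1 : k) : Multiplicative (ZMod 3) → k)
           + (Pi.single (Multiplicative.ofAdd (2 : ZMod 3)) (1 : k) :
              Multiplicative (ZMod 3) → k)} ∧
      𝒜 s = Submodule.span k
        {(Pi.single (Multiplicative.ofAdd (1 : ZMod 3)) (1 : k) : Multiplicative (ZMod 3) → k)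
           - (Pi.single (Multiplicative.ofAdd (2 : ZMod 3)) (1 : k) :
              Multiplicative (ZMod 3) → k)} :=
  hopf_gradings_of_functions_on_C3_general 𝒜 hdecomp hmul hone hcounit hconn hnontriv
end

section
/- Let k be a field of characteristic ≠ 2 with no primitive 4th root of unity, and let F = {t, t², t³, t⁴} ⊆ C_5. There is no ergodic connected grading X of k^F compatible with the Hopf structure of k^{C_5}: any normalized homogeneous element h = δ_t + xδ_{t²} + yδ_{t³} + zδ_{t⁴} of nontrivial degree preserved up to scalar by the antipode must satisfy z² = 1, y = zx, x = zy, and if x⁴ = 1 with x ∈ {1, −1} then {δ_F, h, h², h³} fails to be a basis of k^F. -/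
/-- Let `k` be a field of characteristic `≠ 2` with no primitive 4th root
of unity, and identify `C_5` with `ZMod 5` (so `F = {1,2,3,4}` and the antipode is
`a ↦ a ∘ (-·)`).  Any normalised homogeneous element
`h = δ_t + x δ_{t²} + y δ_{t³} + z δ_{t⁴}` whose line is preserved by the antipode
(i.e. `h ∘ (-·) = c • h` for some scalar `c`) satisfies `z² = 1`, `y = zx`, `x = zy`; and if
`x = 1` or `x = −1` (so `x⁴ = 1`), then `{δ_F, h, h², h³}` fails to be a basis of `k^F`,
being linearly dependent. -/
theorem no_ergodic_hopf_grading_block_C5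
    {k : Type*} [Field k] (hchar : (2 : k) ≠ 0)
    (hno4 : ¬ ∃ i : k, i ^ 2 = -1)
    (x y z : k) (h : ZMod 5 → k)
    (hh : h = (Pi.single (1 : ZMod 5) (1 : k) : ZMod 5 → k)
        + (Pi.single (2 : ZMod 5) x : ZMod 5 → k)
        + (Pi.single (3 : ZMod 5) y : ZMod 5 → k)
        + (Pi.single (4 : ZMod 5) z : ZMod 5 → k))
    (c : k) (hS : (fun s : ZMod 5 => h (-s)) = c • h) :
    z ^ 2 = 1 ∧ y = z * x ∧ x = z * y ∧
    ((x = 1 ∨ x = -1) →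
      ¬ LinearIndependent k
        ![(fun s : ZMod 5 => if s = 0 then (0 : k) else 1), h, h * h, h * h * h]) := by
  have h0 : h 0 = 0 := by
    rw [hh]; simp only [Pi.add_apply, Pi.single_apply]
    norm_num [show (0:ZMod 5) ≠ 1 by decide, show (0:ZMod 5) ≠ 2 by decide,
      show (0:ZMod 5) ≠ 3 by decide, show (0:ZMod 5) ≠ 4 by decide]
  have h1 : h 1 = 1 := by
    rw [hh]; simp only [Pi.add_apply, Pi.single_apply]
    norm_num [show (1:ZMod 5) ≠ 2 by decide, show (1:ZMod 5) ≠ 3 by decide,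
      show (1:ZMod 5) ≠ 4 by decide]
  have h2 : h 2 = x := by
    rw [hh]; simp only [Pi.add_apply, Pi.single_apply]
    norm_num [show (2:ZMod 5) ≠ 1 by decide, show (2:ZMod 5) ≠ 3 by decide,
      show (2:ZMod 5) ≠ 4 by decide]
  have h3 : h 3 = y := by
    rw [hh]; simp only [Pi.add_apply, Pi.single_apply]
    norm_num [show (3:ZMod 5) ≠ 1 by decide, show (3:ZMod 5) ≠ 2 by decide,
      show (3:ZMod 5) ≠ 4 by decide]
  have h4 : h 4 = z := by
    rw [hh]; simp only [Pi.add_apply, Pi.single_apply]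
    norm_num [show (4:ZMod 5) ≠ 1 by decide, show (4:ZMod 5) ≠ 2 by decide,
      show (4:ZMod 5) ≠ 3 by decide]
  have e1 : z = c := by
    have := congrFun hS 1
    simpa [h1, h4, show (-1 : ZMod 5) = 4 by decide] using this
  have e2 : y = c * x := by
    have := congrFun hS 2
    simpa [h2, h3, show (-2 : ZMod 5) = 3 by decide] using this
  have e3 : x = c * y := by
    have := congrFun hS 3
    simpa [h2, h3, show (-3 : ZMod 5) = 2 by decide] using this
  have e4 : (1 : k) = c * z := by
    have := congrFun hS 4
    simpa [h1, h4, show (-4 : ZMod 5) = 1 by decide] using this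
  rw [e1] at e4
  have hc2 : c * c = 1 := e4.symm
  have hz2 : z ^ 2 = 1 := by rw [sq, e1]; exact hc2
  refine ⟨hz2, by rw [e2, e1], by rw [e3, e1], ?_⟩
  intro hx hli
  have hx2 : x * x = 1 := by rcases hx with hx | hx <;> simp [hx]
  have hy2 : y * y = 1 := by
    rw [e2]
    calc c * x * (c * x) = (c * c) * (x * x) := by ring
    _ = 1 := by rw [hc2, hx2, one_mul]
  have hsq : h * h = (fun s : ZMod 5 => if s = 0 then (0 : k) else 1) := by
    funext s
    have hs : s = 0 ∨ s = 1 ∨ s = 2 ∨ s = 3 ∨ s = 4 := by revert s; decide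
    rcases hs with rfl | rfl | rfl | rfl | rfl <;>
      simp only [Pi.mul_apply, h0, h1, h2, h3, h4, hx2, hy2] <;>
      norm_num [show (1:ZMod 5) ≠ 0 by decide, show (2:ZMod 5) ≠ 0 by decide,
        show (3:ZMod 5) ≠ 0 by decide, show (4:ZMod 5) ≠ 0 by decide]
    rw [← sq, hz2]
  have hinj := hli.injective
  have : (0 : Fin 4) = 2 := by
    apply hinj
    simp [hsq]
  exact absurd this (by decide)
end
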